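/- arXiv:1406.1857 — 3 statements merged into one kernel-verified Lean document; each statement's English description precedes it below -/
import Mathlib

section
/- For any two distinct odd primes p and q, λ_p(q) = λ_q(λ₄(p)·p), i.e., the Legendre symbol (q/p) equals the Legendre symbol ((-1)^((p-1)/2)·p / q). -/
/-- Quadratic reciprocity: for distinct odd primes `p` and `q`,
`λ_p(q) = λ_q(λ₄(p)·p)`, i.e. `(q/p) = ((-1)^((p-1)/2)·p / q)`. -/
theorem legendreSym_reciprocity (p q : ℕ) [Fact p.Prime] [Fact q.Prime]
    (hp : p ≠ 2) (hq : q ≠ 2) (hpq : p ≠ q) :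
    legendreSym p q = legendreSym q ((-1) ^ ((p - 1) / 2) * (p : ℤ)) := by
  have hq1 : p % 2 = 1 := (Fact.out : p.Prime).eq_two_or_odd.resolve_left hp
  have hq2 : q % 2 = 1 := (Fact.out : q.Prime).eq_two_or_odd.resolve_left hq
  have hp1 : (p - 1) / 2 = p / 2 := by omega
  have key : legendreSym q ((-1) ^ (p / 2)) = (legendreSym q (-1)) ^ (p / 2) :=
    map_pow (legendreSym.hom q) (-1) (p / 2)
  rw [hp1, legendreSym.mul, key, legendreSym.at_neg_one hq,
    ZMod.χ₄_eq_neg_one_pow hq2, ← pow_mul,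
    legendreSym.quadratic_reciprocity' hq hp, mul_comm (q / 2)]
end

section
/- For distinct odd primes p and q, the product over all places v of Q of the Hilbert symbols (p,q)_v equals 1; explicitly, (p,q)_∞ · (p,q)_2 · (p,q)_p · (p,q)_q · ∏_{l odd prime, l≠p,q} (p,q)_l = 1, which unravels to (-1)^(((p-1)/2)((q-1)/2)) · λ_p(q) · λ_q(p) = 1. -/
/-- The `l`-unit part of a rational: `u_a` where `a = l^(v_l(a)) · u_a`. -/
noncomputable def unitPart (l : ℕ) (a : ℚ) : ℚ := a / (l : ℚ) ^ padicValRat l a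

/-- `t_{a,b} = (-1)^(v_l(a)v_l(b)) u_a^(v_l(b)) u_b^(-v_l(a))`, a unit at `l`. -/
noncomputable def tSym (l : ℕ) (a b : ℚ) : ℚ :=
  (-1) ^ (padicValRat l a * padicValRat l b) *
    unitPart l a ^ padicValRat l b * unitPart l b ^ (-(padicValRat l a))

/-- The Hilbert symbol `(a,b)_l` at an odd prime `l`: the Legendre symbol `λ_l`
of the `l`-unit `t_{a,b}`, evaluated via the quadratic character of `ℤ/lℤ`. -/
noncomputable def hilbertSymbolOdd (l : ℕ) [Fact l.Prime] (a b : ℚ) : ℤ :=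
  quadraticChar (ZMod l) ((tSym l a b : ℚ) : ZMod l)

/-- For a rational `x` that is a `2`-adic unit, `(x-1)/2` up to `2`-adic parity:
`(x.num - x.den)/2` (the denominator is odd, so this has the right parity). -/
def eHalf (x : ℚ) : ℤ := (x.num - (x.den : ℤ)) / 2

/-- `λ₈` of a rational that is a `2`-adic unit, via `χ₈` of `num · den⁻¹` mod `8`. -/
noncomputable def lam8Q (x : ℚ) : ℤ := ZMod.χ₈ ((x.num : ZMod 8) * (x.den : ZMod 8)⁻¹)

/-- The Hilbert symbol `(a,b)_2 = (-1)^(((u_a-1)/2)((u_b-1)/2)) · λ₈(t_{a,b})`. -/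
noncomputable def hilbertSymbolTwo (a b : ℚ) : ℤ :=
  (((-1 : ℤˣ) ^ (eHalf (unitPart 2 a) * eHalf (unitPart 2 b)) : ℤˣ) : ℤ) *
    lam8Q (tSym 2 a b)

/-- The Hilbert symbol at the archimedean place of `ℚ`. -/
noncomputable def hilbertSymbolInfty (a b : ℚ) : ℤ := if a < 0 ∧ b < 0 then -1 else 1

lemma padicValRat_prime_ne {l r : ℕ} (hl : l.Prime) (hr : r.Prime) (h : l ≠ r) :
    padicValRat l (r : ℚ) = 0 := by
  rw [padicValRat.of_nat,
    padicValNat.eq_zero_of_not_dvd fun hd => h ((Nat.prime_dvd_prime_iff_eq hl hr).mp hd)]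
  rfl

lemma unitPart_of_val_zero {l : ℕ} {a : ℚ} (h : padicValRat l a = 0) : unitPart l a = a := by
  simp [unitPart, h]

lemma quadraticChar_inv' {F : Type*} [Field F] [Fintype F] [DecidableEq F] (a : F) :
    quadraticChar F a⁻¹ = quadraticChar F a := by
  rcases eq_or_ne a 0 with h | h
  · simp [h]
  · have h1 : quadraticChar F a * quadraticChar F a⁻¹ = 1 := by
      rw [← map_mul, mul_inv_cancel₀ h, map_one]
    have h2 := quadraticChar_sq_one (F := F) h
    linear_combination (quadraticChar F a) * h1 - (quadraticChar F a⁻¹) * h2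

lemma tSym_of_vals_zero {l : ℕ} {a b : ℚ} (ha : padicValRat l a = 0)
    (hb : padicValRat l b = 0) : tSym l a b = 1 := by
  simp [tSym, ha, hb]

/-- Hilbert's product formula for distinct odd primes `p`, `q`: the symbol
`(p,q)_l` is `1` at every place `l ∉ {∞, 2, p, q}`, the product over all places is
`1`, and this unravels to `(-1)^(((p-1)/2)((q-1)/2)) · λ_p(q) · λ_q(p) = 1`. -/
theorem hilbert_product_formula (p q : ℕ) [Fact p.Prime] [Fact q.Prime]
    (hp : p ≠ 2) (hq : q ≠ 2) (hpq : p ≠ q) :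
    (∀ (l : ℕ) [Fact l.Prime], l ≠ 2 → l ≠ p → l ≠ q →
        hilbertSymbolOdd l (p : ℚ) (q : ℚ) = 1) ∧
      hilbertSymbolInfty (p : ℚ) (q : ℚ) * hilbertSymbolTwo (p : ℚ) (q : ℚ) *
          hilbertSymbolOdd p (p : ℚ) (q : ℚ) * hilbertSymbolOdd q (p : ℚ) (q : ℚ) = 1 ∧
      (-1 : ℤ) ^ ((p - 1) / 2 * ((q - 1) / 2)) * legendreSym p q * legendreSym q p = 1 := by
  have hpP : p.Prime := Fact.out
  have hqP : q.Prime := Fact.out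
  have hp2 : padicValRat 2 (p : ℚ) = 0 :=
    padicValRat_prime_ne Nat.prime_two hpP (Ne.symm hp)
  have hq2 : padicValRat 2 (q : ℚ) = 0 :=
    padicValRat_prime_ne Nat.prime_two hqP (Ne.symm hq)
  have hpp : padicValRat p (p : ℚ) = 1 := padicValRat.self hpP.one_lt
  have hqq : padicValRat q (q : ℚ) = 1 := padicValRat.self hqP.one_lt
  have hqp : padicValRat p (q : ℚ) = 0 := padicValRat_prime_ne hpP hqP hpq
  have hpq' : padicValRat q (p : ℚ) = 0 := padicValRat_prime_ne hqP hpP (Ne.symm hpq)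
  have key : ∀ (l : ℕ) [Fact l.Prime], l ≠ 2 → l ≠ p → l ≠ q →
      hilbertSymbolOdd l (p : ℚ) (q : ℚ) = 1 := by
    intro l _ _ hlp hlq
    rw [hilbertSymbolOdd, tSym_of_vals_zero
      (padicValRat_prime_ne Fact.out hpP hlp) (padicValRat_prime_ne Fact.out hqP hlq)]
    simp
  -- symbol at p
  have hOp : hilbertSymbolOdd p (p : ℚ) (q : ℚ) = legendreSym p q := by
    have ht : tSym p (p : ℚ) (q : ℚ) = (q : ℚ)⁻¹ := by
      simp [tSym, hqp, hpp, unitPart_of_val_zero]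
    rw [hilbertSymbolOdd, ht, Rat.cast_def, Rat.inv_natCast_num_of_pos hqP.pos,
      Rat.inv_natCast_den_of_pos hqP.pos, legendreSym]
    rw [Int.cast_natCast]
    rw [show ((1:ℤ):ZMod p) / ((q:ℕ):ZMod p) = ((q:ZMod p))⁻¹ by push_cast; rw [one_div]]
    exact quadraticChar_inv' _
  -- symbol at q
  have hOq : hilbertSymbolOdd q (p : ℚ) (q : ℚ) = legendreSym q p := by
    have ht : tSym q (p : ℚ) (q : ℚ) = (p : ℚ) := by
      simp [tSym, hpq', hqq, unitPart_of_val_zero]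
    rw [hilbertSymbolOdd, ht, Rat.cast_natCast, legendreSym]
    rw [Int.cast_natCast]
  -- symbol at 2
  have hoddp : p % 2 = 1 := hpP.eq_two_or_odd.resolve_left hp
  have hoddq : q % 2 = 1 := hqP.eq_two_or_odd.resolve_left hq
  have heP : eHalf (unitPart 2 (p : ℚ)) = ((p / 2 : ℕ) : ℤ) := by
    rw [unitPart_of_val_zero hp2]
    simp only [eHalf, Rat.num_natCast, Rat.den_natCast, Nat.cast_one]
    omega
  have heQ : eHalf (unitPart 2 (q : ℚ)) = ((q / 2 : ℕ) : ℤ) := by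
    rw [unitPart_of_val_zero hq2]
    simp only [eHalf, Rat.num_natCast, Rat.den_natCast, Nat.cast_one]
    omega
  have hT : hilbertSymbolTwo (p : ℚ) (q : ℚ) = (-1 : ℤ) ^ (p / 2 * (q / 2)) := by
    rw [hilbertSymbolTwo, tSym_of_vals_zero hp2 hq2, heP, heQ]
    have : ((p / 2 : ℕ) : ℤ) * ((q / 2 : ℕ) : ℤ) = ((p / 2 * (q / 2) : ℕ) : ℤ) := by
      push_cast; ring
    rw [this, zpow_natCast]
    simp [lam8Q]
  have hI : hilbertSymbolInfty (p : ℚ) (q : ℚ) = 1 := by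
    rw [hilbertSymbolInfty, if_neg]
    rintro ⟨h1, -⟩
    exact absurd h1 (not_lt.mpr (by positivity))
  have hQR := legendreSym.quadratic_reciprocity hp hq hpq
  have hdvp : (p - 1) / 2 = p / 2 := by omega
  have hdvq : (q - 1) / 2 = q / 2 := by omega
  refine ⟨key, ?_, ?_⟩
  · rw [hI, hT, hOp, hOq, one_mul, mul_assoc, mul_comm (legendreSym p q), hQR, ← pow_add,
      ← two_mul, pow_mul]
    norm_num
  · rw [hdvp, hdvq, mul_assoc, mul_comm (legendreSym p q), hQR, ← pow_add, ← two_mul, pow_mul]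
    norm_num
end

section
/- For every odd prime p, the product of all elements of the group (Z/pZ)^× equals -1 (Wilson's theorem), and consequently the product of all elements of ((Z/pZ)^× × (Z/qZ)^×)/{±1}, computed in two ways via the isomorphism (Z/pqZ)^× ≅ (Z/pZ)^× × (Z/qZ)^× for distinct odd primes p, q, yields quadratic reciprocity. -/
/-- Wilson's theorem: for every odd prime `p` the product of all elements of
`(ℤ/pℤ)ˣ` is `-1`; consequently (computing the product of all elements of
`((ℤ/pℤ)ˣ × (ℤ/qℤ)ˣ)/{±1}` in two ways via `(ℤ/pqℤ)ˣ ≅ (ℤ/pℤ)ˣ × (ℤ/qℤ)ˣ`,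
Rousseau's proof) quadratic reciprocity:
`λ_p(q)·λ_q(p) = (-1)^(((p-1)/2)((q-1)/2))`. -/
theorem wilson_and_quadratic_reciprocity (p q : ℕ) [Fact p.Prime] [Fact q.Prime]
    (hp : p ≠ 2) (hq : q ≠ 2) (hpq : p ≠ q) :
    (∏ x : (ZMod p)ˣ, x = (-1 : (ZMod p)ˣ)) ∧
      legendreSym p q * legendreSym q p = (-1) ^ ((p - 1) / 2 * ((q - 1) / 2)) := by
  refine ⟨FiniteField.prod_univ_units_id_eq_neg_one, ?_⟩
  have hpo : Odd p := (Fact.out : p.Prime).odd_of_ne_two hp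
  have hqo : Odd q := (Fact.out : q.Prime).odd_of_ne_two hq
  have h1 : (p - 1) / 2 = p / 2 := by obtain ⟨k, hk⟩ := hpo; omega
  have h2 : (q - 1) / 2 = q / 2 := by obtain ⟨k, hk⟩ := hqo; omega
  rw [h1, h2, mul_comm (legendreSym p q)]
  exact legendreSym.quadratic_reciprocity hp hq hpq
end
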